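/- Let A and B be real symmetric positive semidefinite n×n matrices with A − B positive semidefinite and A positive definite (hence invertible). Then for every w ∈ ℝⁿ, (Bw)ᵀ A⁻¹ (Bw) ≤ wᵀ B w. -/

import Mathlib

open Matrix

namespace Matrix

variable {ι : Type*} [Fintype ι]

lemma PosSemidef.dotProduct_mulVec_comm {B : Matrix ι ι ℝ} (hB : B.PosSemidef) (v w : ι → ℝ) :
    v ⬝ᵥ (B *ᵥ w) = w ⬝ᵥ (B *ᵥ v) := by
  have hBt : Bᵀ = B := hB.isHermitian
  rw [dotProduct_mulVec, ← mulVec_transpose, hBt, dotProduct_comm]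

lemma PosSemidef.two_mul_dotProduct_mulVec_le {B : Matrix ι ι ℝ} (hB : B.PosSemidef)
    (v w : ι → ℝ) : 2 * (v ⬝ᵥ (B *ᵥ w)) ≤ v ⬝ᵥ (B *ᵥ v) + w ⬝ᵥ (B *ᵥ w) := by
  have hdiff : 0 ≤ (w - v) ⬝ᵥ (B *ᵥ (w - v)) := by simpa using hB.dotProduct_mulVec_nonneg (w - v)
  rw [mulVec_sub, sub_dotProduct, dotProduct_sub, dotProduct_sub,
    hB.dotProduct_mulVec_comm w v] at hdiff
  linarith

lemma dotProduct_mulVec_le_of_posSemidef_sub {A B : Matrix ι ι ℝ} (hAB : (A - B).PosSemidef)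
    (v : ι → ℝ) : v ⬝ᵥ (B *ᵥ v) ≤ v ⬝ᵥ (A *ᵥ v) := by
  have h := hAB.dotProduct_mulVec_nonneg v
  rw [star_trivial, sub_mulVec, dotProduct_sub] at h
  linarith

/-- With `v = A⁻¹ B w`: `vᵀBv ≤ vᵀAv = vᵀBw`, while `2 vᵀBw ≤ vᵀBv + wᵀBw` since `B` is PSD;
together `vᵀBw ≤ wᵀBw`. -/
theorem dotProduct_inv_mulVec_le_of_posSemidef_sub [DecidableEq ι] {A B : Matrix ι ι ℝ}
    (hA : IsUnit A) (hB : B.PosSemidef) (hAB : (A - B).PosSemidef) (w : ι → ℝ) :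
    (B *ᵥ w) ⬝ᵥ (A⁻¹ *ᵥ (B *ᵥ w)) ≤ w ⬝ᵥ (B *ᵥ w) := by
  set v := A⁻¹ *ᵥ (B *ᵥ w)
  have hAv : A *ᵥ v = B *ᵥ w := by
    rw [mulVec_mulVec, mul_nonsing_inv A ((isUnit_iff_isUnit_det A).mp hA), one_mulVec]
  have hBv : v ⬝ᵥ (B *ᵥ v) ≤ v ⬝ᵥ (B *ᵥ w) :=
    hAv ▸ dotProduct_mulVec_le_of_posSemidef_sub hAB v
  have hamgm := hB.two_mul_dotProduct_mulVec_le v w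
  rw [dotProduct_comm]
  linarith

end Matrix

theorem stmt2 (n : ℕ) (A B : Matrix (Fin n) (Fin n) ℝ)
    (hB : B.PosSemidef) (hAB : (A - B).PosSemidef)
    (hApd : A.PosDef) :
    ∀ w : Fin n → ℝ, (B *ᵥ w) ⬝ᵥ (A⁻¹ *ᵥ (B *ᵥ w)) ≤ w ⬝ᵥ (B *ᵥ w) :=
  dotProduct_inv_mulVec_le_of_posSemidef_sub hApd.isUnit hB hAB
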